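/- Let A : ℝ³ → M₃(ℝ) be a smooth matrix field with div A = 0 (column-wise divergence). Then div(sym(curl A)) = -curl(curl(vskw A)), where curl on matrix fields is column-wise, sym is the symmetric part, and vskw is the axial vector of the skew part. -/

import Mathlib

noncomputable section

/-- Levi-Civita symbol in three dimensions. -/
def lc (i j k : Fin 3) : ℝ :=
  if (i, j, k) = (0, 1, 2) ∨ (i, j, k) = (1, 2, 0) ∨ (i, j, k) = (2, 0, 1) then 1
  else if (i, j, k) = (0, 2, 1) ∨ (i, j, k) = (2, 1, 0) ∨ (i, j, k) = (1, 0, 2) then -1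
  else 0

/-- Partial derivative `∂ᵢ f` of a scalar field on `ℝ³`. -/
def pd (i : Fin 3) (f : (Fin 3 → ℝ) → ℝ) (x : Fin 3 → ℝ) : ℝ :=
  fderiv ℝ f x (Pi.single i 1)

/-- Curl of a vector field: `(curl v)ᵢ = εᵢⱼₖ ∂ⱼ vₖ`. -/
def vcurl (v : (Fin 3 → ℝ) → Fin 3 → ℝ) (x : Fin 3 → ℝ) (i : Fin 3) : ℝ :=
  ∑ j, ∑ k, lc i j k * pd j (fun y => v y k) x

/-- Column-wise curl of a matrix field: `(curl M)ᵢⱼ = εᵢₖₗ ∂ₖ Mₗⱼ`. -/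
def mcurl (M : (Fin 3 → ℝ) → Matrix (Fin 3) (Fin 3) ℝ) (x : Fin 3 → ℝ) :
    Matrix (Fin 3) (Fin 3) ℝ :=
  Matrix.of fun i j => ∑ k, ∑ l, lc i k l * pd k (fun y => M y l j) x

/-- Column-wise divergence of a matrix field: `(div M)ᵢ = ∂ⱼ Mⱼᵢ`. -/
def mdiv (M : (Fin 3 → ℝ) → Matrix (Fin 3) (Fin 3) ℝ) (x : Fin 3 → ℝ) (i : Fin 3) : ℝ :=
  ∑ j, pd j (fun y => M y j i) x

/-- The algebraic operator `S(A) = Aᵀ - tr(A)·I₃`. -/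
def Sop (A : Matrix (Fin 3) (Fin 3) ℝ) : Matrix (Fin 3) (Fin 3) ℝ :=
  A.transpose - A.trace • (1 : Matrix (Fin 3) (Fin 3) ℝ)

/-- `(mskw V)ᵢⱼ = -εᵢⱼₖ Vₖ`. -/
def mskw (V : Fin 3 → ℝ) : Matrix (Fin 3) (Fin 3) ℝ :=
  Matrix.of fun i j => -∑ k, lc i j k * V k

/-- `(vskw M)ᵢ = -(1/2) εᵢⱼₖ Mⱼₖ`. -/
def vskw (M : Matrix (Fin 3) (Fin 3) ℝ) : Fin 3 → ℝ :=
  fun i => -(1 / 2 : ℝ) * ∑ j, ∑ k, lc i j k * M j k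

/-! Both sides equal `½ curl w`, where `wₗ = ∂ⱼ Aₗⱼ` is the row-wise divergence `div Aᵀ`.
On the left, `div (curl A) = 0` because `εⱼₖₗ` is antisymmetric while `∂ⱼ∂ₖ` is symmetric, and
`div ((curl A)ᵀ) = curl w` after commuting `∂ⱼ` past `∂ₖ`. On the right, the `ε`–`δ` identity
gives `curl (vskw A) = ½ (div A - div Aᵀ)`, which is `-½ w` since `div A = 0`. -/

section PartialDerivative

variable {f g : (Fin 3 → ℝ) → ℝ} {x : Fin 3 → ℝ} (a : Fin 3)

lemma pd_add (hf : DifferentiableAt ℝ f x) (hg : DifferentiableAt ℝ g x) :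
    pd a (fun y => f y + g y) x = pd a f x + pd a g x := by
  simp [pd, fderiv_fun_add hf hg]

lemma pd_const_mul (c : ℝ) (hf : DifferentiableAt ℝ f x) :
    pd a (fun y => c * f y) x = c * pd a f x := by
  simp [pd, fderiv_const_mul hf]

lemma pd_sum {ι : Type*} (s : Finset ι) {F : ι → (Fin 3 → ℝ) → ℝ}
    (hF : ∀ p ∈ s, DifferentiableAt ℝ (F p) x) :
    pd a (fun y => ∑ p ∈ s, F p y) x = ∑ p ∈ s, pd a (F p) x := by
  simp [pd, fderiv_fun_sum hF]

lemma pd_sum_sum_mul {ι κ : Type*} [Fintype ι] [Fintype κ] (c : ι → κ → ℝ)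
    {F : ι → κ → (Fin 3 → ℝ) → ℝ} (hF : ∀ k l, DifferentiableAt ℝ (F k l) x) :
    pd a (fun y => ∑ k, ∑ l, c k l * F k l y) x = ∑ k, ∑ l, c k l * pd a (F k l) x := by
  rw [pd_sum _ _ fun k _ => by fun_prop]
  refine Finset.sum_congr rfl fun k _ => ?_
  rw [pd_sum _ _ fun l _ => by fun_prop]
  exact Finset.sum_congr rfl fun l _ => pd_const_mul _ _ (hF k l)

lemma differentiable_pd (hf : ContDiff ℝ 2 f) : Differentiable ℝ (pd a f) :=
  ((hf.fderiv_right (by norm_num)).clm_apply contDiff_const).differentiable one_ne_zero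

lemma pd_comm (hf : ContDiff ℝ 2 f) (b : Fin 3) : pd a (pd b f) x = pd b (pd a f) x := by
  have hdf : DifferentiableAt ℝ (fderiv ℝ f) x :=
    ((hf.fderiv_right (by norm_num)).differentiable one_ne_zero).differentiableAt
  have h : ∀ a b : Fin 3, pd a (pd b f) x =
      fderiv ℝ (fderiv ℝ f) x (Pi.single a 1) (Pi.single b 1) := by
    intro a b
    change fderiv ℝ (fun y => fderiv ℝ f y (Pi.single b 1)) x (Pi.single a 1) = _
    simp [fderiv_clm_apply hdf (differentiableAt_const _)]
  rw [h, h]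
  exact hf.contDiffAt.isSymmSndFDerivAt (by simp) _ _

end PartialDerivative

lemma sum_lc_mul_lc (q b j k : Fin 3) :
    ∑ c, lc q b c * lc c j k =
      (if q = j ∧ b = k then 1 else 0) - (if q = k ∧ b = j then 1 else 0) := by
  fin_cases q <;> fin_cases b <;> fin_cases j <;> fin_cases k <;> simp [lc]

lemma lc_swap (i j k : Fin 3) : lc i j k = -lc j i k := by
  fin_cases i <;> fin_cases j <;> fin_cases k <;> simp [lc]

lemma sum_lc_mul_sum_lc_mul (D : Fin 3 → Fin 3 → Fin 3 → ℝ) (q : Fin 3) :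
    ∑ b, ∑ c, lc q b c * ∑ j, ∑ k, lc c j k * D b j k = ∑ b, D b q b - ∑ b, D b b q := by
  calc ∑ b, ∑ c, lc q b c * ∑ j, ∑ k, lc c j k * D b j k
      = ∑ b, ∑ j, ∑ k, (∑ c, lc q b c * lc c j k) * D b j k := by
        simp only [Finset.mul_sum, Finset.sum_mul, mul_assoc]
        refine Finset.sum_congr rfl fun b _ => ?_
        rw [Finset.sum_comm]
        refine Finset.sum_congr rfl fun j _ => ?_
        rw [Finset.sum_comm]
    _ = ∑ b, D b q b - ∑ b, D b b q := by
        simp [sum_lc_mul_lc, ite_and, sub_mul, Finset.sum_sub_distrib]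

lemma sum_lc_mul_eq_zero_of_symm (T : Fin 3 → Fin 3 → Fin 3 → ℝ)
    (hT : ∀ j k l, T j k l = T k j l) :
    ∑ j, ∑ k, ∑ l, lc j k l * T j k l = 0 := by
  have h : ∑ j, ∑ k, ∑ l, lc j k l * T j k l = -∑ j, ∑ k, ∑ l, lc j k l * T j k l := by
    simp only [← Finset.sum_neg_distrib]
    rw [Finset.sum_comm]
    refine Finset.sum_congr rfl fun k _ => Finset.sum_congr rfl fun j _ =>
      Finset.sum_congr rfl fun l _ => ?_
    rw [lc_swap j k, hT]
    ring
  linarith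

lemma mdiv_smul_add {M N : (Fin 3 → ℝ) → Matrix (Fin 3) (Fin 3) ℝ} {x : Fin 3 → ℝ} (c : ℝ)
    (hM : ∀ i j, DifferentiableAt ℝ (fun y => M y i j) x)
    (hN : ∀ i j, DifferentiableAt ℝ (fun y => N y i j) x) (i : Fin 3) :
    mdiv (fun y => c • (M y + N y)) x i = c * (mdiv M x i + mdiv N x i) := by
  simp only [mdiv, Matrix.smul_apply, Matrix.add_apply, smul_eq_mul, Finset.mul_sum,
    ← Finset.sum_add_distrib, mul_add]
  refine Finset.sum_congr rfl fun j _ => ?_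
  rw [pd_add _ ((hM j i).const_mul c) ((hN j i).const_mul c), pd_const_mul _ _ (hM j i),
    pd_const_mul _ _ (hN j i)]

lemma vcurl_const_mul {v : (Fin 3 → ℝ) → Fin 3 → ℝ} {x : Fin 3 → ℝ} (c : ℝ)
    (hv : ∀ k, DifferentiableAt ℝ (fun y => v y k) x) (i : Fin 3) :
    vcurl (fun y k => c * v y k) x i = c * vcurl v x i := by
  simp only [vcurl, pd_const_mul _ _ (hv _), Finset.mul_sum]
  exact Finset.sum_congr rfl fun j _ => Finset.sum_congr rfl fun k _ => by ring

section MatrixFields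

variable {A : (Fin 3 → ℝ) → Matrix (Fin 3) (Fin 3) ℝ}

lemma vcurl_vskw (hA : ∀ i j, Differentiable ℝ fun z => A z i j) (x : Fin 3 → ℝ) (q : Fin 3) :
    vcurl (fun z => vskw (A z)) x q =
      (1 / 2) * (mdiv A x q - mdiv (fun z => (A z).transpose) x q) := by
  have hpd : ∀ b c, pd b (fun z => vskw (A z) c) x =
      -(1 / 2) * ∑ j, ∑ k, lc c j k * pd b (fun z => A z j k) x := fun b c => by
    simp only [vskw]
    rw [pd_const_mul _ _ (by fun_prop), pd_sum_sum_mul _ _ fun j k => (hA j k).differentiableAt]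
  simp only [vcurl, hpd, mul_left_comm _ (-(1 / 2 : ℝ)), ← Finset.mul_sum,
    sum_lc_mul_sum_lc_mul (fun b j k => pd b (fun z => A z j k) x), mdiv, Matrix.transpose_apply]
  ring

lemma mdiv_mcurl (hA : ∀ i j, ContDiff ℝ 2 fun z => A z i j) (x : Fin 3 → ℝ) (i : Fin 3) :
    mdiv (mcurl A) x i = 0 := by
  have h := sum_lc_mul_eq_zero_of_symm (fun j k l => pd j (pd k fun z => A z l i) x)
    fun j k l => pd_comm _ (hA l i) k
  simp only [mdiv, mcurl, Matrix.of_apply]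
  rw [← h]
  exact Finset.sum_congr rfl fun j _ =>
    pd_sum_sum_mul _ _ fun k l => (differentiable_pd k (hA l i)).differentiableAt

lemma mdiv_transpose_mcurl (hA : ∀ i j, ContDiff ℝ 2 fun z => A z i j) (x : Fin 3 → ℝ)
    (i : Fin 3) :
    mdiv (fun y => (mcurl A y).transpose) x i = vcurl (mdiv fun z => (A z).transpose) x i := by
  have hrow : ∀ k l, pd k (fun y => ∑ j, pd j (fun z => A z l j) y) x =
      ∑ j, pd j (pd k fun z => A z l j) x := fun k l => by
    rw [pd_sum _ _ fun j _ => (differentiable_pd j (hA l j)).differentiableAt]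
    exact Finset.sum_congr rfl fun j _ => pd_comm _ (hA l j) j
  simp only [mdiv, vcurl, mcurl, Matrix.transpose_apply, Matrix.of_apply, hrow, Finset.mul_sum]
  calc _ = ∑ j, ∑ k, ∑ l, lc i k l * pd j (pd k fun z => A z l j) x :=
        Finset.sum_congr rfl fun j _ =>
          pd_sum_sum_mul _ _ fun k l => (differentiable_pd k (hA l j)).differentiableAt
    _ = ∑ k, ∑ j, ∑ l, lc i k l * pd j (pd k fun z => A z l j) x := Finset.sum_comm
    _ = _ := Finset.sum_congr rfl fun k _ => Finset.sum_comm

end MatrixFields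

theorem stmt_11 (A : (Fin 3 → ℝ) → Matrix (Fin 3) (Fin 3) ℝ)
    (hA : ∀ i j, ContDiff ℝ 2 fun x => A x i j)
    (hdiv : ∀ (x : Fin 3 → ℝ) (i : Fin 3), mdiv A x i = 0) :
    ∀ (x : Fin 3 → ℝ) (i : Fin 3),
      mdiv (fun y => (1 / 2 : ℝ) • (mcurl A y + (mcurl A y).transpose)) x i =
        -vcurl (fun y => vcurl (fun z => vskw (A z)) y) x i := by
  intro x i
  have hdiff_pd : ∀ k l j, Differentiable ℝ (pd k fun z => A z l j) :=
    fun k l j => differentiable_pd k (hA l j)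
  have hcurl : ∀ k l, DifferentiableAt ℝ (fun y => mcurl A y k l) x := fun k l => by
    simp only [mcurl, Matrix.of_apply]; fun_prop
  have hcurl_vskw : vcurl (fun z => vskw (A z)) =
      fun y q => -(1 / 2) * mdiv (fun z => (A z).transpose) y q := by
    funext y q
    rw [vcurl_vskw (fun i j => (hA i j).differentiable two_ne_zero), hdiv]
    ring
  rw [mdiv_smul_add (N := fun y => (mcurl A y).transpose) _ hcurl fun k l => hcurl l k,
    mdiv_mcurl hA, mdiv_transpose_mcurl hA, hcurl_vskw,
    vcurl_const_mul _ fun k => by simp only [mdiv]; fun_prop]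
  ring

end
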